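/- Consider the score $\psi(W; \theta, \eta) = (d - m(x))\,\big(y - \ell(x) - \theta (d - m(x))\big)$ for $W = (y, d, x)$ and nuisance $\eta = (\ell, m)$, evaluated at the true nuisance $\eta_0 = (\ell_0, m_0)$ of the partially linear model $y = \theta_0 d + g_0(x) + \epsilon$, $d = m_0(x) + \xi$ with $\mathbb{E}[\epsilon \mid x, d] = 0$, $\mathbb{E}[\xi \mid x] = 0$, and $\ell_0(x) = \mathbb{E}[y \mid x]$. Then (i) $\mathbb{E}[\psi(W; \theta_0, \eta_0)] = 0$, and (ii) the Gateaux derivative in the nuisance vanishes at the truth: for any bounded measurable directions $(h_\ell, h_m)$, $\frac{d}{dr}\mathbb{E}\big[\psi(W; \theta_0, \eta_0 + r(h_\ell, h_m))\big]\Big|_{r=0} = 0$. -/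

import Mathlib

open MeasureTheory Filter Topology

lemma aux_mulL2 {Ω : Type*} [MeasurableSpace Ω] {μ : Measure Ω} {f g : Ω → ℝ}
    (hf : MemLp f 2 μ) (hg : MemLp g 2 μ) : Integrable (fun ω => f ω * g ω) μ := by
  have h : MemLp (f • g) 1 μ :=
    hg.smul hf
  simpa [smul_eq_mul, Pi.mul_def] using memLp_one_iff_integrable.mp h

lemma aux_bddL2 {Ω : Type*} [MeasurableSpace Ω] {μ : Measure Ω} [IsFiniteMeasure μ]
    {f : Ω → ℝ} (hf : Measurable f) (C : ℝ) (hC : ∀ ω, |f ω| ≤ C) : MemLp f 2 μ :=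
  MemLp.of_bound hf.aestronglyMeasurable C (Filter.Eventually.of_forall fun ω => by
    simpa using hC ω)


/-- **Neyman orthogonality of the partialling-out score in the partially
linear model.** Consider data `W = (y, d, x)` generated by
`y = θ₀ d + g₀(x) + ε`, `d = m₀(x) + ξ` with the conditional moment
restrictions `E[ε | x, d] = 0` and `E[ξ | x] = 0` (encoded via bounded
measurable test functions), and let `ℓ₀(x) = E[y | x] = θ₀ m₀(x) + g₀(x)`.
For the score
`ψ(W; θ, (ℓ, m)) = (d - m(x)) (y - ℓ(x) - θ (d - m(x)))` we have
(i) `E[ψ(W; θ₀, η₀)] = 0`, and (ii) for any bounded measurable directions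
`(h_ℓ, h_m)`, the Gateaux derivative of `r ↦ E[ψ(W; θ₀, η₀ + r (h_ℓ, h_m))]`
vanishes at `r = 0`. -/
theorem neyman_orthogonality_partially_linear
    {Ω α : Type*} [MeasurableSpace Ω] [MeasurableSpace α]
    (μ : Measure Ω) [IsProbabilityMeasure μ]
    (y d : Ω → ℝ) (x : Ω → α) (θ₀ : ℝ) (g₀ m₀ ℓ₀ : α → ℝ)
    (hy : MemLp y 2 μ) (hd : MemLp d 2 μ) (hx : Measurable x)
    (hg₀ : Measurable g₀) (hg₀b : ∃ C, ∀ z, |g₀ z| ≤ C)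
    (hm₀ : Measurable m₀) (hm₀b : ∃ C, ∀ z, |m₀ z| ≤ C)
    -- the reduced-form outcome regression: ℓ₀(x) = E[y|x] = θ₀ m₀(x) + g₀(x)
    (hℓ₀ : ∀ z, ℓ₀ z = θ₀ * m₀ z + g₀ z)
    -- E[ε | x, d] = 0, where ε = y - θ₀ d - g₀(x)
    (hε : ∀ f : α × ℝ → ℝ, Measurable f → (∃ C, ∀ p, |f p| ≤ C) →
      ∫ ω, (y ω - θ₀ * d ω - g₀ (x ω)) * f (x ω, d ω) ∂μ = 0)
    -- E[ξ | x] = 0, where ξ = d - m₀(x)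
    (hξ : ∀ f : α → ℝ, Measurable f → (∃ C, ∀ z, |f z| ≤ C) →
      ∫ ω, (d ω - m₀ (x ω)) * f (x ω) ∂μ = 0) :
    (∫ ω, (d ω - m₀ (x ω)) * (y ω - ℓ₀ (x ω) - θ₀ * (d ω - m₀ (x ω))) ∂μ = 0) ∧
    (∀ hℓ hm : α → ℝ, Measurable hℓ → (∃ C, ∀ z, |hℓ z| ≤ C) →
      Measurable hm → (∃ C, ∀ z, |hm z| ≤ C) →
      HasDerivAt
        (fun r : ℝ => ∫ ω,
          (d ω - (m₀ (x ω) + r * hm (x ω))) *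
            (y ω - (ℓ₀ (x ω) + r * hℓ (x ω))
              - θ₀ * (d ω - (m₀ (x ω) + r * hm (x ω)))) ∂μ)
        0 0) := by
  obtain ⟨Cg, hCg⟩ := hg₀b
  obtain ⟨Cm, hCm⟩ := hm₀b
  have hgx : MemLp (fun ω => g₀ (x ω)) 2 μ :=
    aux_bddL2 (hg₀.comp hx) Cg fun ω => hCg (x ω)
  have hmx : MemLp (fun ω => m₀ (x ω)) 2 μ :=
    aux_bddL2 (hm₀.comp hx) Cm fun ω => hCm (x ω)
  have hεL2 : MemLp (fun ω => y ω - θ₀ * d ω - g₀ (x ω)) 2 μ :=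
    (hy.sub (hd.const_mul θ₀)).sub hgx
  have hξL2 : MemLp (fun ω => d ω - m₀ (x ω)) 2 μ := hd.sub hmx
  have Iεξ : Integrable (fun ω => (y ω - θ₀ * d ω - g₀ (x ω)) * (d ω - m₀ (x ω))) μ :=
    aux_mulL2 hεL2 hξL2
  -- Part (i) via truncation and dominated convergence
  have key : ∫ ω, (y ω - θ₀ * d ω - g₀ (x ω)) * (d ω - m₀ (x ω)) ∂μ = 0 := by
    have hzero : ∀ n : ℕ, ∫ ω,
        (y ω - θ₀ * d ω - g₀ (x ω)) * (max (-(n:ℝ)) (min (n:ℝ) (d ω - m₀ (x ω)))) ∂μ = 0 := by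
      intro n
      exact hε (fun p => max (-(n:ℝ)) (min (n:ℝ) (p.2 - m₀ p.1)))
        (measurable_const.max (measurable_const.min
          (measurable_snd.sub (hm₀.comp measurable_fst))))
        ⟨n, fun p => by
          rw [abs_le]
          constructor
          · exact le_max_left _ _
          · exact max_le ((neg_nonpos.mpr (Nat.cast_nonneg n)).trans (Nat.cast_nonneg n)) (min_le_left _ _)⟩
    have hT : Tendsto (fun n : ℕ => ∫ ω,
        (y ω - θ₀ * d ω - g₀ (x ω)) * (max (-(n:ℝ)) (min (n:ℝ) (d ω - m₀ (x ω)))) ∂μ)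
        atTop (𝓝 (∫ ω, (y ω - θ₀ * d ω - g₀ (x ω)) * (d ω - m₀ (x ω)) ∂μ)) := by
      apply tendsto_integral_of_dominated_convergence
        (fun ω => |y ω - θ₀ * d ω - g₀ (x ω)| * |d ω - m₀ (x ω)|)
      · intro n
        exact (hεL2.aestronglyMeasurable.mul
          ((aemeasurable_const.max (aemeasurable_const.min
            ((hd.aestronglyMeasurable.aemeasurable).sub
              ((hm₀.comp hx).aemeasurable)))).aestronglyMeasurable))
      · exact (Iεξ.abs.congr (Eventually.of_forall fun ω => by simp [abs_mul]))
      · intro n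
        refine Eventually.of_forall fun ω => ?_
        rw [Real.norm_eq_abs, abs_mul]
        refine mul_le_mul_of_nonneg_left ?_ (abs_nonneg _)
        rw [abs_le]
        constructor
        · refine le_max_of_le_right (le_min ?_ (neg_abs_le _))
          exact (neg_nonpos.mpr (abs_nonneg _)).trans (Nat.cast_nonneg n)
        · refine max_le ?_ ((min_le_right _ _).trans (le_abs_self _))
          exact (neg_nonpos.mpr (Nat.cast_nonneg n)).trans (abs_nonneg _)
      · refine Eventually.of_forall fun ω => ?_
        have hev : ∀ᶠ n : ℕ in atTop,
            (y ω - θ₀ * d ω - g₀ (x ω)) * (max (-(n:ℝ)) (min (n:ℝ) (d ω - m₀ (x ω))))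
            = (y ω - θ₀ * d ω - g₀ (x ω)) * (d ω - m₀ (x ω)) := by
          filter_upwards [eventually_ge_atTop ⌈|d ω - m₀ (x ω)|⌉₊] with n hn
          have hn' : |d ω - m₀ (x ω)| ≤ (n : ℝ) :=
            (Nat.le_ceil _).trans (Nat.cast_le.mpr hn)
          rw [min_eq_right ((le_abs_self _).trans hn'),
            max_eq_right ((neg_le_neg hn').trans (neg_abs_le _))]
        exact Tendsto.congr' (EventuallyEq.symm hev) tendsto_const_nhds
    exact tendsto_nhds_unique (hT.congr hzero) tendsto_const_nhds
  refine ⟨?_, ?_⟩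
  · calc ∫ ω, (d ω - m₀ (x ω)) * (y ω - ℓ₀ (x ω) - θ₀ * (d ω - m₀ (x ω))) ∂μ
        = ∫ ω, (y ω - θ₀ * d ω - g₀ (x ω)) * (d ω - m₀ (x ω)) ∂μ := by
          refine integral_congr_ae (Eventually.of_forall fun ω => ?_)
          simp only [hℓ₀]; ring
      _ = 0 := key
  · intro hℓ hm hℓmeas hℓb hmmeas hmb
    obtain ⟨Cl, hCl⟩ := hℓb
    obtain ⟨Ch, hCh⟩ := hmb
    have hlx : MemLp (fun ω => hℓ (x ω)) 2 μ := aux_bddL2 (hℓmeas.comp hx) Cl fun ω => hCl (x ω)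
    have hhx : MemLp (fun ω => hm (x ω)) 2 μ := aux_bddL2 (hmmeas.comp hx) Ch fun ω => hCh (x ω)
    have I2a : Integrable (fun ω => (d ω - m₀ (x ω)) * hℓ (x ω)) μ := aux_mulL2 hξL2 hlx
    have I2b : Integrable (fun ω => (d ω - m₀ (x ω)) * hm (x ω)) μ := aux_mulL2 hξL2 hhx
    have I2c : Integrable (fun ω => (y ω - θ₀ * d ω - g₀ (x ω)) * hm (x ω)) μ := aux_mulL2 hεL2 hhx
    have I3 : Integrable (fun ω => hm (x ω) * hℓ (x ω) - θ₀ * (hm (x ω) * hm (x ω))) μ :=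
      (aux_mulL2 hhx hlx).sub ((aux_mulL2 hhx hhx).const_mul θ₀)
    have IB : Integrable (fun ω => θ₀ * ((d ω - m₀ (x ω)) * hm (x ω))) μ :=
      I2b.const_mul θ₀
    have IA : Integrable (fun ω => θ₀ * ((d ω - m₀ (x ω)) * hm (x ω))
        - (d ω - m₀ (x ω)) * hℓ (x ω)) μ := IB.sub I2a
    have I2 : Integrable (fun ω => θ₀ * ((d ω - m₀ (x ω)) * hm (x ω))
        - (d ω - m₀ (x ω)) * hℓ (x ω) - (y ω - θ₀ * d ω - g₀ (x ω)) * hm (x ω)) μ :=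
      IA.sub I2c
    have Eξhℓ : ∫ ω, (d ω - m₀ (x ω)) * hℓ (x ω) ∂μ = 0 := hξ hℓ hℓmeas ⟨Cl, hCl⟩
    have Eξhm : ∫ ω, (d ω - m₀ (x ω)) * hm (x ω) ∂μ = 0 := hξ hm hmmeas ⟨Ch, hCh⟩
    have Eεhm : ∫ ω, (y ω - θ₀ * d ω - g₀ (x ω)) * hm (x ω) ∂μ = 0 :=
      hε (fun p => hm p.1) (hmmeas.comp measurable_fst) ⟨Ch, fun p => hCh p.1⟩
    have hI2 : ∫ ω, (θ₀ * ((d ω - m₀ (x ω)) * hm (x ω))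
        - (d ω - m₀ (x ω)) * hℓ (x ω) - (y ω - θ₀ * d ω - g₀ (x ω)) * hm (x ω)) ∂μ = 0 := by
      rw [integral_sub IA I2c, integral_sub IB I2a, integral_const_mul _, Eξhm, Eξhℓ, Eεhm]
      ring
    set C₃ := ∫ ω, (hm (x ω) * hℓ (x ω) - θ₀ * (hm (x ω) * hm (x ω))) ∂μ with hC₃
    have hfun : (fun r : ℝ => ∫ ω, (d ω - (m₀ (x ω) + r * hm (x ω))) *
        (y ω - (ℓ₀ (x ω) + r * hℓ (x ω)) - θ₀ * (d ω - (m₀ (x ω) + r * hm (x ω)))) ∂μ)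
        = fun r => C₃ * r ^ 2 := by
      funext r
      have hptw : ∀ ω, (d ω - (m₀ (x ω) + r * hm (x ω))) *
          (y ω - (ℓ₀ (x ω) + r * hℓ (x ω)) - θ₀ * (d ω - (m₀ (x ω) + r * hm (x ω))))
          = (y ω - θ₀ * d ω - g₀ (x ω)) * (d ω - m₀ (x ω))
            + r * (θ₀ * ((d ω - m₀ (x ω)) * hm (x ω)) - (d ω - m₀ (x ω)) * hℓ (x ω)
              - (y ω - θ₀ * d ω - g₀ (x ω)) * hm (x ω))
            + r ^ 2 * (hm (x ω) * hℓ (x ω) - θ₀ * (hm (x ω) * hm (x ω))) := by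
        intro ω; rw [hℓ₀]; ring
      have ISa : Integrable (fun ω => r * (θ₀ * ((d ω - m₀ (x ω)) * hm (x ω))
          - (d ω - m₀ (x ω)) * hℓ (x ω) - (y ω - θ₀ * d ω - g₀ (x ω)) * hm (x ω))) μ :=
        I2.const_mul r
      have ISb : Integrable (fun ω => r ^ 2 * (hm (x ω) * hℓ (x ω)
          - θ₀ * (hm (x ω) * hm (x ω)))) μ := I3.const_mul (r ^ 2)
      have ISc : Integrable (fun ω => (y ω - θ₀ * d ω - g₀ (x ω)) * (d ω - m₀ (x ω))
          + r * (θ₀ * ((d ω - m₀ (x ω)) * hm (x ω)) - (d ω - m₀ (x ω)) * hℓ (x ω)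
            - (y ω - θ₀ * d ω - g₀ (x ω)) * hm (x ω))) μ := Iεξ.add ISa
      rw [integral_congr_ae (Eventually.of_forall hptw), integral_add ISc ISb,
        integral_add Iεξ ISa, integral_const_mul _, integral_const_mul _, key, hI2, ← hC₃]
      ring
    rw [hfun]
    have h := (hasDerivAt_pow 2 (0:ℝ)).const_mul C₃
    simpa using h
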